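/- arXiv:1204.2769 — 4 statements merged into one kernel-verified Lean document; each statement's English description precedes it below -/
import Mathlib

section
/- (Lemma 5.7 of the paper.) Let V be a complex vector space and W a finite-dimensional complex vector space, and for each i ∈ ℕ let A_i : ℂ → (V →ₗ[ℂ] W) be a family of linear operators depending polynomially on the complex parameter x. Assume that d_{A(x)} < ∞ for every x ∈ ℂ. Then there exists a finite set S ⊂ ℂ such that for all x₁, x₂ ∈ ℂ \ S and all x₃ ∈ S one has d_{A(x₁)} = d_{A(x₂)} ≥ d_{A(x₃)}. -/
open Module Submodule Polynomial

/-- A linearly independent finite family of functions `J → ℂ` admits evaluation points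
making the corresponding square matrix invertible. -/
lemma aux_exists_det_ne_zero {J : Type*} {r : ℕ} (f : Fin r → J → ℂ)
    (hf : LinearIndependent ℂ f) :
    ∃ j : Fin r → J, (Matrix.of fun a b => f b (j a)).det ≠ 0 := by
  classical
  set g : J → (Fin r → ℂ) := fun j b => f b j with hg
  have hsingle : ∀ w : Fin r → ℂ, w = ∑ b, w b • (Pi.single b 1 : Fin r → ℂ) := by
    intro w
    have h1 : ∀ b, w b • (Pi.single b 1 : Fin r → ℂ) = Pi.single b (w b) := by
      intro b
      rw [← Pi.single_smul, smul_eq_mul, mul_one]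
    simp_rw [h1]
    exact (Finset.univ_sum_single w).symm
  have hspan : span ℂ (Set.range g) = ⊤ := by
    by_contra hU
    obtain ⟨u, hu⟩ : ∃ u, u ∉ span ℂ (Set.range g) := by
      by_contra h
      push_neg at h
      exact hU (eq_top_iff.2 fun u _ => h u)
    set U : Submodule ℂ (Fin r → ℂ) := span ℂ (Set.range g) with hUdef
    have hmk : U.mkQ u ≠ 0 := by
      rw [Ne, Submodule.mkQ_apply, Submodule.Quotient.mk_eq_zero]
      exact hu
    obtain ⟨ψ, hψ⟩ : ∃ ψ : Module.Dual ℂ ((Fin r → ℂ) ⧸ U), ψ (U.mkQ u) ≠ 0 := by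
      by_contra h
      push_neg at h
      exact hmk ((Module.forall_dual_apply_eq_zero_iff ℂ _).1 h)
    set φ : Module.Dual ℂ (Fin r → ℂ) := ψ.comp U.mkQ with hφ
    have hφU : ∀ w ∈ U, φ w = 0 := by
      intro w hw
      have : U.mkQ w = 0 := by
        rw [Submodule.mkQ_apply, Submodule.Quotient.mk_eq_zero]; exact hw
      simp [hφ, this]
    have hφeval : ∀ w : Fin r → ℂ, φ w = ∑ b, w b * φ (Pi.single b 1) := by
      intro w
      conv_lhs => rw [hsingle w]
      rw [map_sum]
      simp_rw [map_smul, smul_eq_mul]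
    set c : Fin r → ℂ := fun b => φ (Pi.single b 1) with hc
    have hsum : ∑ b, c b • f b = 0 := by
      funext j
      have hgj : φ (g j) = 0 := hφU _ (subset_span (Set.mem_range_self j))
      rw [hφeval (g j)] at hgj
      simp only [Finset.sum_apply, Pi.smul_apply, smul_eq_mul, Pi.zero_apply]
      calc ∑ b, c b * f b j = ∑ b, g j b * c b := by
            apply Finset.sum_congr rfl
            intro b _
            rw [mul_comm]
        _ = 0 := hgj
    have hc0 : ∀ b, c b = 0 := Fintype.linearIndependent_iff.1 hf c hsum
    apply hψ
    show φ u = 0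
    rw [hφeval u]
    exact Finset.sum_eq_zero fun b _ => by rw [show φ (Pi.single b 1) = c b from rfl, hc0 b, mul_zero]
  obtain ⟨t, hts, htspan, htind⟩ := exists_linearIndependent ℂ (Set.range g)
  rw [hspan] at htspan
  let B' : Basis t ℂ (Fin r → ℂ) :=
    Basis.mk htind (by rw [Subtype.range_coe]; exact htspan.ge)
  have hB' : ∀ s : t, B' s = (s : Fin r → ℂ) := fun s => Basis.mk_apply _ _ s
  haveI : Fintype t := FiniteDimensional.fintypeBasisIndex B'
  have hcard : Fintype.card t = r := by
    have h1 := Module.finrank_eq_card_basis B'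
    rw [Module.finrank_fin_fun] at h1
    exact h1.symm
  let B'' : Basis (Fin r) ℂ (Fin r → ℂ) := B'.reindex (Fintype.equivFinOfCardEq hcard)
  have hB''app : ∀ a, B'' a = B' ((Fintype.equivFinOfCardEq hcard).symm a) :=
    fun a => B'.reindex_apply _ a
  have hmem : ∀ a : Fin r, ∃ jj : J, g jj = B'' a := by
    intro a
    have : (B'' a : Fin r → ℂ) ∈ t := by
      rw [hB''app, hB']
      exact Subtype.coe_prop _
    exact hts this
  choose j hj using hmem
  refine ⟨j, ?_⟩
  have hrows : (fun a => (Matrix.of fun a b => f b (j a)) a) = ⇑B'' := by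
    funext a
    exact hj a
  have hunit : IsUnit (Matrix.of fun a b => f b (j a)) :=
    Matrix.linearIndependent_rows_iff_isUnit.1 (hrows ▸ B''.linearIndependent)
  exact ((Matrix.isUnit_iff_isUnit_det _).1 hunit).ne_zero

/-- **Lemma 5.7.** Let `V` be a complex vector space and `W` a finite-dimensional complex
vector space, and let `A i : ℂ → (V →ₗ[ℂ] W)`, `i ∈ ℕ`, be a countable family of linear
operators depending polynomially on a complex parameter `x`.  For `x : ℂ` let
`d_{A(x)}` be the codimension in `V` of `⋂ i, ker (A i x)`, i.e. the finrank of the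
quotient `V ⧸ ⨅ i, ker (A i x)`; assume it is finite for every `x`.  Then there is a
finite set `S ⊆ ℂ` such that for all `x₁, x₂ ∉ S` and `x₃ ∈ S` we have
`d_{A(x₁)} = d_{A(x₂)} ≥ d_{A(x₃)}`. -/
theorem lemma_dim_drop {V W : Type*} [AddCommGroup V] [Module ℂ V]
    [AddCommGroup W] [Module ℂ W] [FiniteDimensional ℂ W]
    (A : ℕ → ℂ → (V →ₗ[ℂ] W))
    (hpoly : ∀ (i : ℕ) (v : V), ∃ (n : ℕ) (w : Fin n → W),
      ∀ x : ℂ, A i x v = ∑ k : Fin n, x ^ (k : ℕ) • w k)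
    (hfin : ∀ x : ℂ, FiniteDimensional ℂ (V ⧸ (⨅ i : ℕ, LinearMap.ker (A i x)))) :
    ∃ S : Finset ℂ, ∀ x₁ ∉ S, ∀ x₂ ∉ S, ∀ x₃ ∈ S,
      Module.finrank ℂ (V ⧸ (⨅ i : ℕ, LinearMap.ker (A i x₁))) =
        Module.finrank ℂ (V ⧸ (⨅ i : ℕ, LinearMap.ker (A i x₂))) ∧
      Module.finrank ℂ (V ⧸ (⨅ i : ℕ, LinearMap.ker (A i x₃))) ≤
        Module.finrank ℂ (V ⧸ (⨅ i : ℕ, LinearMap.ker (A i x₁))) := by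
  classical
  set K : ℂ → Submodule ℂ V := fun x => ⨅ i : ℕ, LinearMap.ker (A i x) with hK
  set d : ℂ → ℕ := fun x => Module.finrank ℂ (V ⧸ K x) with hd
  -- coordinate functionals
  let B : Basis (Fin (Module.finrank ℂ W)) ℂ W := Module.finBasis ℂ W
  let F : (ℕ × Fin (Module.finrank ℂ W)) → ℂ → (V →ₗ[ℂ] ℂ) :=
    fun j x => (B.coord j.2).comp (A j.1 x)
  have hKmem : ∀ (x : ℂ) (v : V), v ∈ K x ↔ ∀ j, F j x v = 0 := by
    intro x v
    rw [hK]
    simp only [Submodule.mem_iInf, LinearMap.mem_ker]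
    constructor
    · intro h j
      show B.coord j.2 (A j.1 x v) = 0
      rw [h j.1]
      exact map_zero _
    · intro h i
      refine (B.forall_coord_eq_zero_iff).1 fun cIdx => h (i, cIdx)
  -- key semicontinuity statement
  have key : ∀ x₀ : ℂ, ∃ Z : Set ℂ, Z.Finite ∧ x₀ ∉ Z ∧ ∀ x, x ∉ Z → d x₀ ≤ d x := by
    intro x₀
    haveI : FiniteDimensional ℂ (V ⧸ K x₀) := hfin x₀
    obtain bq : Basis (Fin (d x₀)) ℂ (V ⧸ K x₀) := Module.finBasisOfFinrankEq ℂ _ rfl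
    choose v hv using fun b => Submodule.mkQ_surjective (K x₀) (bq b)
    have hind₀ : LinearIndependent ℂ (fun b => (K x₀).mkQ (v b)) := by
      have : (fun b => (K x₀).mkQ (v b)) = ⇑bq := funext hv
      rw [this]; exact bq.linearIndependent
    -- the functions x ↦ F j x₀ (v b), as functions of j, are linearly independent
    have hfind : LinearIndependent ℂ (fun b (j : ℕ × Fin (Module.finrank ℂ W)) =>
        F j x₀ (v b)) := by
      rw [Fintype.linearIndependent_iff]
      intro c hc
      have hmem : (∑ b, c b • v b) ∈ K x₀ := by
        rw [hKmem]
        intro j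
        have := congrFun hc j
        simpa [Finset.sum_apply, map_sum, map_smul, smul_eq_mul] using this
      have hzero : ∑ b, c b • (K x₀).mkQ (v b) = 0 := by
        rw [show (∑ b, c b • (K x₀).mkQ (v b)) = (K x₀).mkQ (∑ b, c b • v b) by
            rw [map_sum]; simp only [map_smul]]
        rw [Submodule.mkQ_apply, Submodule.Quotient.mk_eq_zero]
        exact hmem
      exact Fintype.linearIndependent_iff.1 hind₀ c hzero
    obtain ⟨j, hdet⟩ := aux_exists_det_ne_zero _ hfind
    -- build the polynomial
    choose n w hw using fun (a b : Fin (d x₀)) => hpoly (j a).1 (v b)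
    set Q : Matrix (Fin (d x₀)) (Fin (d x₀)) (Polynomial ℂ) :=
      Matrix.of fun a b => ∑ k : Fin (n a b),
        Polynomial.C (B.coord (j a).2 (w a b k)) * Polynomial.X ^ (k : ℕ) with hQ
    have hQeval : ∀ (x : ℂ) (a b), (Q a b).eval x = F (j a) x (v b) := by
      intro x a b
      rw [hQ]
      show Polynomial.eval x (∑ k : Fin (n a b),
        Polynomial.C (B.coord (j a).2 (w a b k)) * Polynomial.X ^ (k : ℕ)) = _
      rw [Polynomial.eval_finset_sum]
      show _ = B.coord (j a).2 (A (j a).1 x (v b))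
      rw [hw a b x, map_sum]
      refine Finset.sum_congr rfl fun k _ => ?_
      rw [map_smul, smul_eq_mul, Polynomial.eval_mul, Polynomial.eval_C,
        Polynomial.eval_pow, Polynomial.eval_X, mul_comm]
    have hPeval : ∀ x : ℂ, (Q.det).eval x =
        (Matrix.of fun a b => F (j a) x (v b)).det := by
      intro x
      have h1 : Polynomial.eval x Q.det = (Q.map (Polynomial.evalRingHom x)).det :=
        RingHom.map_det (Polynomial.evalRingHom x) Q
      rw [h1]
      congr 1
      ext a b
      exact hQeval x a b
    have hdet' : (Matrix.of fun a b => F (j a) x₀ (v b)).det ≠ 0 := hdet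
    have hP0 : Q.det ≠ 0 := by
      intro h
      rw [← hPeval x₀, h, Polynomial.eval_zero] at hdet'
      exact hdet' rfl
    refine ⟨{x | Q.det.IsRoot x}, Polynomial.finite_setOf_isRoot hP0, ?_, ?_⟩
    · show ¬ Q.det.IsRoot x₀
      rw [Polynomial.IsRoot, hPeval x₀]
      exact hdet'
    · intro x hx
      have hdx : (Matrix.of fun a b => F (j a) x (v b)).det ≠ 0 := by
        rw [← hPeval x]; exact hx
      haveI : FiniteDimensional ℂ (V ⧸ K x) := hfin x
      have hindx : LinearIndependent ℂ (fun b => (K x).mkQ (v b)) := by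
        rw [Fintype.linearIndependent_iff]
        intro c hc
        have hmem : (∑ b, c b • v b) ∈ K x := by
          rw [← Submodule.Quotient.mk_eq_zero, ← Submodule.mkQ_apply, map_sum]
          simpa [map_smul] using hc
        have hmv : (Matrix.of fun a b => F (j a) x (v b)).mulVec c = 0 := by
          funext a
          show ∑ b, F (j a) x (v b) * c b = 0
          have := (hKmem x _).1 hmem (j a)
          rw [map_sum] at this
          simpa [map_smul, smul_eq_mul, mul_comm] using this
        have hinj : Function.Injective
            ((Matrix.of fun a b => F (j a) x (v b)).mulVec) :=
          Matrix.mulVec_injective_iff_isUnit.2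
            ((Matrix.isUnit_iff_isUnit_det _).2 (isUnit_iff_ne_zero.2 hdx))
        have hc0 : c = 0 := hinj (hmv.trans (Matrix.mulVec_zero _).symm)
        exact fun b => congrFun hc0 b
      have := hindx.fintype_card_le_finrank
      simpa using this
  -- boundedness of d
  have bdd : ∃ N, ∀ x, d x ≤ N := by
    by_contra hb
    push_neg at hb
    choose xs hxs using hb
    choose Z hZf hxZ hZ using fun N => key (xs N)
    have hcount : (⋃ N, Z N).Countable :=
      Set.countable_iUnion fun N => (hZf N).countable
    have hne : (⋃ N, Z N) ≠ Set.univ := by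
      intro h
      exact not_countable_complex (h ▸ hcount)
    obtain ⟨y, hy⟩ := (Set.ne_univ_iff_exists_notMem _).1 hne
    have hylt : ∀ N, N < d y := fun N =>
      lt_of_lt_of_le (hxs N) (hZ N y fun h => hy (Set.mem_iUnion.2 ⟨N, h⟩))
    exact lt_irrefl _ (hylt (d y))
  obtain ⟨N, hN⟩ := bdd
  have hbdd : BddAbove (Set.range d) := ⟨N, fun m ⟨x, hx⟩ => hx ▸ hN x⟩
  have hmem : sSup (Set.range d) ∈ Set.range d :=
    Nat.sSup_mem ⟨d 0, Set.mem_range_self 0⟩ hbdd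
  obtain ⟨x₀, hx₀⟩ := hmem
  have hmax : ∀ x, d x ≤ d x₀ := fun x => hx₀ ▸ le_csSup hbdd (Set.mem_range_self x)
  obtain ⟨Z, hZf, hx₀Z, hZ⟩ := key x₀
  refine ⟨hZf.toFinset, ?_⟩
  intro x₁ hx₁ x₂ hx₂ x₃ _
  rw [Set.Finite.mem_toFinset] at hx₁ hx₂
  have h₁ : d x₁ = d x₀ := le_antisymm (hmax x₁) (hZ x₁ hx₁)
  have h₂ : d x₂ = d x₀ := le_antisymm (hmax x₂) (hZ x₂ hx₂)
  constructor
  · show d x₁ = d x₂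
    rw [h₁, h₂]
  · show d x₃ ≤ d x₁
    rw [h₁]
    exact hmax x₃
end

section
/- (Computational core of Theorem 3.3, the classification of simple objects of the category Ô by rational ℓ-weights.) Let f⁺, f⁻ : ℤ → ℂ be sequences with f⁺_r = 0 for r < 0, f⁻_r = 0 for r > 0, and f⁺_0 · f⁻_0 = 1. Then the following are equivalent. (i) There exist N ≥ 1 and complex numbers a_1, …, a_N with a_1 ≠ 0 ≠ a_N such that ∑_{j=1}^{N} a_j (f⁺_{j+s} − f⁻_{j+s}) = 0 for every s ∈ ℤ. (ii) There exist polynomials P, Q ∈ ℂ[z] with deg P = deg Q =: d, with P(0) ≠ 0 ≠ Q(0), with (P(0)/Q(0))·(p_d/q_d) = 1 where p_d, q_d are the leading coefficients of P and Q, such that Q(z)·(∑_{r≥0} f⁺_r z^r) = P(z) holds in the ring of formal power series ℂ[[z]], and Q*(w)·(∑_{r≥0} f⁻_{−r} w^r) = P*(w) holds in ℂ[[w]], where P*, Q* are the degree-d reversals of P, Q. In other words, the pair of series (∑_{r≥0} f⁺_r z^r, ∑_{r≥0} f⁻_{−r} z^{−r}) consists of the Laurent expansions at 0 and at ∞ of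 one rational function f that is regular and nonvanishing at 0 and ∞ and satisfies f(0)·f(∞) = 1, if and only if the two-sided linear recurrence in (i) holds. -/
open scoped BigOperators

open Finset Polynomial in

private lemma conv_coeff (Q : Polynomial ℂ) (d : ℕ) (hQ : Q.natDegree ≤ d)
    (f : ℤ → ℂ) (hf : ∀ r : ℤ, r < 0 → f r = 0) (n : ℕ) :
    (PowerSeries.coeff n) ((Q : PowerSeries ℂ) * PowerSeries.mk (fun r : ℕ => f (r : ℤ))) =
      ∑ k ∈ Finset.range (d + 1), Q.coeff k * f ((n : ℤ) - k) := by
  rw [PowerSeries.coeff_mul, Finset.Nat.sum_antidiagonal_eq_sum_range_succ_mk]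
  simp only [Polynomial.coeff_coe, PowerSeries.coeff_mk]
  have h1 : ∑ k ∈ Finset.range (n + 1), Q.coeff k * f (((n - k : ℕ) : ℤ))
      = ∑ k ∈ Finset.range (n + 1), Q.coeff k * f ((n : ℤ) - k) := by
    refine Finset.sum_congr rfl fun k hk => ?_
    rw [Finset.mem_range, Nat.lt_succ_iff] at hk
    rw [show (((n - k : ℕ)) : ℤ) = (n : ℤ) - k by omega]
  rw [h1]
  have e1 : ∑ k ∈ Finset.range (n + 1), Q.coeff k * f ((n : ℤ) - k)
      = ∑ k ∈ Finset.range (n + d + 1), Q.coeff k * f ((n : ℤ) - k) := by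
    apply Finset.sum_subset (Finset.range_subset_range.2 (by omega))
    intro k _ hk
    rw [Finset.mem_range, not_lt] at hk
    rw [hf _ (by omega), mul_zero]
  have e2 : ∑ k ∈ Finset.range (d + 1), Q.coeff k * f ((n : ℤ) - k)
      = ∑ k ∈ Finset.range (n + d + 1), Q.coeff k * f ((n : ℤ) - k) := by
    apply Finset.sum_subset (Finset.range_subset_range.2 (by omega))
    intro k _ hk
    rw [Finset.mem_range, not_lt] at hk
    rw [Polynomial.coeff_eq_zero_of_natDegree_lt (by omega), zero_mul]
  rw [e1, ← e2]

private lemma reflect_le {Q : Polynomial ℂ} {d : ℕ} (hQ : Q.natDegree ≤ d) :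
    (Polynomial.reflect d Q).natDegree ≤ d := by
  apply Polynomial.natDegree_le_iff_coeff_eq_zero.2
  intro m hm
  rw [Polynomial.coeff_reflect, Polynomial.revAt_eq_self_of_lt hm]
  exact Polynomial.coeff_eq_zero_of_natDegree_lt (lt_of_le_of_lt hQ hm)

private lemma reflect_sum (Q : Polynomial ℂ) (d m : ℕ) (g : ℤ → ℂ) :
    ∑ k ∈ Finset.range (d + 1), (Polynomial.reflect d Q).coeff k * g (-((m : ℤ) - k)) =
    ∑ k ∈ Finset.range (d + 1), Q.coeff k * g (((d : ℤ) - m) - k) := by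
  rw [← Finset.sum_range_reflect]
  refine Finset.sum_congr rfl fun j hj => ?_
  rw [Finset.mem_range, Nat.lt_succ_iff] at hj
  rw [Polynomial.coeff_reflect, Polynomial.revAt_le (by omega : d + 1 - 1 - j ≤ d)]
  rw [show d - (d + 1 - 1 - j) = j by omega]
  rw [show -((m : ℤ) - ((d + 1 - 1 - j : ℕ) : ℤ)) = ((d : ℤ) - m) - j by omega]

private lemma icc_range_sum (N : ℕ) (F : ℕ → ℂ) (G : ℕ → ℂ)
    (h : ∀ j, 1 ≤ j → j ≤ N → F j = G (N - j)) :
    ∑ j ∈ Finset.Icc 1 N, F j = ∑ k ∈ Finset.range N, G k := by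
  refine Finset.sum_nbij' (fun j => N - j) (fun k => N - k) ?_ ?_ ?_ ?_ ?_ <;>
    simp only [Finset.mem_Icc, Finset.mem_range]
  · intro a ha; omega
  · intro a ha; omega
  · intro a ha; omega
  · intro a ha; omega
  · intro a ha; exact h a ha.1 ha.2

private lemma coeff_sum_C_X (d : ℕ) (c : ℕ → ℂ) (m : ℕ) :
    (∑ k ∈ Finset.range (d + 1), Polynomial.C (c k) * Polynomial.X ^ k).coeff m
      = if m ≤ d then c m else 0 := by
  rw [Polynomial.finset_sum_coeff]
  simp only [Polynomial.coeff_C_mul, Polynomial.coeff_X_pow, mul_ite, mul_one, mul_zero]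
  simp [Finset.sum_ite_eq, Nat.lt_succ_iff]

/-- **Computational core of Theorem 3.3** (classification of simple objects of `Ô` by
rational ℓ-weights).  Let `fp, fm : ℤ → ℂ` with `fp r = 0` for `r < 0`, `fm r = 0` for
`r > 0` and `fp 0 * fm 0 = 1`.  Then the two-sided linear recurrence
`∑_{j=1}^N a_j (fp (j+s) - fm (j+s)) = 0` (for some `N ≥ 1`, `a_1 ≠ 0 ≠ a_N`, and all
`s ∈ ℤ`) holds if and only if the generating series `∑_{r≥0} fp r · z^r` and
`∑_{r≥0} fm (-r) · w^r` are the expansions at `0` and `∞` of a single rational function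
`P/Q`, regular and nonvanishing at `0` and `∞`, with `f(0)·f(∞) = 1`: concretely, there
are polynomials `P, Q` of a common degree `d`, nonvanishing at `0`, with
`(P(0)/Q(0))·(p_d/q_d) = 1`, such that `Q · (∑ fp r z^r) = P` in `ℂ[[z]]` and
`Q* · (∑ fm (-r) w^r) = P*` in `ℂ[[w]]`, where `P*, Q*` are the degree-`d` reversals. -/
theorem rational_lweight_iff_recurrence (fp fm : ℤ → ℂ)
    (hp : ∀ r : ℤ, r < 0 → fp r = 0)
    (hm : ∀ r : ℤ, 0 < r → fm r = 0)
    (h0 : fp 0 * fm 0 = 1) :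
    (∃ N : ℕ, 1 ≤ N ∧ ∃ a : ℕ → ℂ, a 1 ≠ 0 ∧ a N ≠ 0 ∧
       ∀ s : ℤ, ∑ j ∈ Finset.Icc 1 N, a j * (fp ((j : ℤ) + s) - fm ((j : ℤ) + s)) = 0)
    ↔
    (∃ (P Q : Polynomial ℂ) (d : ℕ),
       P.natDegree = d ∧ Q.natDegree = d ∧
       P.eval 0 ≠ 0 ∧ Q.eval 0 ≠ 0 ∧
       (P.eval 0 / Q.eval 0) * (P.coeff d / Q.coeff d) = 1 ∧
       (Q : PowerSeries ℂ) * PowerSeries.mk (fun r : ℕ => fp (r : ℤ)) =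
         (P : PowerSeries ℂ) ∧
       ((Polynomial.reflect d Q : Polynomial ℂ) : PowerSeries ℂ) *
           PowerSeries.mk (fun r : ℕ => fm (-(r : ℤ))) =
         ((Polynomial.reflect d P : Polynomial ℂ) : PowerSeries ℂ)) := by
  constructor
  · rintro ⟨N, hN, a, ha1, haN, hrec⟩
    obtain ⟨d, rfl⟩ : ∃ d, N = d + 1 := ⟨N - 1, by omega⟩
    have hfm0 : fm 0 ≠ 0 := fun h => by rw [h, mul_zero] at h0; exact one_ne_zero h0.symm
    have hfp0 : fp 0 ≠ 0 := fun h => by rw [h, zero_mul] at h0; exact one_ne_zero h0.symm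
    set Q : Polynomial ℂ := ∑ k ∈ Finset.range (d + 1),
      Polynomial.C (a (d + 1 - k)) * Polynomial.X ^ k with hQdef
    have hQc : ∀ m : ℕ, Q.coeff m = if m ≤ d then a (d + 1 - m) else 0 :=
      fun m => coeff_sum_C_X d _ m
    have hQle : Q.natDegree ≤ d := Polynomial.natDegree_le_iff_coeff_eq_zero.2 fun m hmd => by
      rw [hQc, if_neg (by omega)]
    have hrec' : ∀ s : ℤ, ∑ j ∈ Finset.Icc 1 (d + 1), a j * fp ((j : ℤ) + s)
        = ∑ j ∈ Finset.Icc 1 (d + 1), a j * fm ((j : ℤ) + s) := by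
      intro s
      have h := hrec s
      rw [← sub_eq_zero, ← Finset.sum_sub_distrib, ← h]
      exact Finset.sum_congr rfl fun j _ => (mul_sub _ _ _).symm
    have hAB : ∀ n : ℤ, (∑ k ∈ Finset.range (d + 1), Q.coeff k * fp (n - k))
        = ∑ k ∈ Finset.range (d + 1), Q.coeff k * fm (n - k) := by
      intro n
      have eA := icc_range_sum (d + 1)
        (fun j => a j * fp ((j : ℤ) + (n - ((d : ℤ) + 1))))
        (fun k => Q.coeff k * fp (n - k))
        (fun j h1 h2 => by
          beta_reduce
          rw [hQc, if_pos (by omega : d + 1 - j ≤ d), show d + 1 - (d + 1 - j) = j by omega,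
            show n - ((d + 1 - j : ℕ) : ℤ) = (j : ℤ) + (n - ((d : ℤ) + 1)) by omega])
      have eB := icc_range_sum (d + 1)
        (fun j => a j * fm ((j : ℤ) + (n - ((d : ℤ) + 1))))
        (fun k => Q.coeff k * fm (n - k))
        (fun j h1 h2 => by
          beta_reduce
          rw [hQc, if_pos (by omega : d + 1 - j ≤ d), show d + 1 - (d + 1 - j) = j by omega,
            show n - ((d + 1 - j : ℕ) : ℤ) = (j : ℤ) + (n - ((d : ℤ) + 1)) by omega])
      rw [← eA, ← eB]
      exact hrec' _
    have hBbig : ∀ n : ℤ, (d : ℤ) < n →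
        ∑ k ∈ Finset.range (d + 1), Q.coeff k * fm (n - k) = 0 := by
      intro n hn
      refine Finset.sum_eq_zero fun k hk => ?_
      rw [Finset.mem_range, Nat.lt_succ_iff] at hk
      rw [hm _ (by omega), mul_zero]
    set P : Polynomial ℂ := ∑ k ∈ Finset.range (d + 1),
      Polynomial.C (∑ i ∈ Finset.range (d + 1), Q.coeff i * fp ((k : ℤ) - i)) *
        Polynomial.X ^ k with hPdef
    have hPc : ∀ m : ℕ, P.coeff m
        = if m ≤ d then ∑ i ∈ Finset.range (d + 1), Q.coeff i * fp ((m : ℤ) - i) else 0 :=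
      fun m => coeff_sum_C_X d _ m
    have hPle : P.natDegree ≤ d := Polynomial.natDegree_le_iff_coeff_eq_zero.2 fun m hmd => by
      rw [hPc, if_neg (by omega)]
    have hQ0v : Q.coeff 0 = a (d + 1) := by rw [hQc, if_pos (by omega)]; norm_num
    have hQdv : Q.coeff d = a 1 := by
      rw [hQc, if_pos le_rfl, show d + 1 - d = 1 by omega]
    have hP0v : P.coeff 0 = a (d + 1) * fp 0 := by
      rw [hPc, if_pos (by omega)]
      rw [Finset.sum_eq_single_of_mem 0 (Finset.mem_range.2 (by omega))]
      · rw [hQ0v]; norm_num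
      · intro b _ hb
        rw [hp _ (by omega), mul_zero]
    have hPdv : P.coeff d = a 1 * fm 0 := by
      rw [hPc, if_pos le_rfl, hAB (d : ℤ)]
      rw [Finset.sum_eq_single_of_mem d (Finset.mem_range.2 (by omega))]
      · rw [hQdv, sub_self]
      · intro b hb hbd
        rw [Finset.mem_range, Nat.lt_succ_iff] at hb
        rw [hm _ (by omega), mul_zero]
    have hPdeg : P.natDegree = d :=
      le_antisymm hPle (Polynomial.le_natDegree_of_ne_zero
        (by rw [hPdv]; exact mul_ne_zero ha1 hfm0))
    have hQdeg : Q.natDegree = d :=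
      le_antisymm hQle (Polynomial.le_natDegree_of_ne_zero (by rw [hQdv]; exact ha1))
    refine ⟨P, Q, d, hPdeg, hQdeg, ?_, ?_, ?_, ?_, ?_⟩
    · rw [← Polynomial.coeff_zero_eq_eval_zero, hP0v]
      exact mul_ne_zero haN hfp0
    · rw [← Polynomial.coeff_zero_eq_eval_zero, hQ0v]
      exact haN
    · rw [← Polynomial.coeff_zero_eq_eval_zero, ← Polynomial.coeff_zero_eq_eval_zero, hP0v,
        hQ0v, hPdv, hQdv, mul_div_cancel_left₀ _ haN, mul_div_cancel_left₀ _ ha1, h0]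
    · refine PowerSeries.ext fun m => ?_
      rw [conv_coeff Q d hQle fp hp m, Polynomial.coeff_coe, hPc]
      by_cases hmd : m ≤ d
      · rw [if_pos hmd]
      · rw [if_neg hmd, hAB (m : ℤ)]
        exact hBbig _ (by omega)
    · refine PowerSeries.ext fun m => ?_
      have hcv : (PowerSeries.coeff m)
          (((Polynomial.reflect d Q : Polynomial ℂ) : PowerSeries ℂ) *
            PowerSeries.mk (fun r : ℕ => fm (-(r : ℤ))))
          = ∑ k ∈ Finset.range (d + 1), (Polynomial.reflect d Q).coeff k * fm (-((m : ℤ) - k)) :=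
        conv_coeff _ d (reflect_le hQle) (fun t => fm (-t)) (fun r hr => hm _ (by omega)) m
      rw [hcv, reflect_sum, ← hAB ((d : ℤ) - m), Polynomial.coeff_coe, Polynomial.coeff_reflect]
      by_cases hmd : m ≤ d
      · rw [Polynomial.revAt_le hmd, hPc, if_pos (by omega)]
        refine Finset.sum_congr rfl fun k _ => ?_
        rw [show ((d : ℤ) - m) - k = ((d - m : ℕ) : ℤ) - k by omega]
      · rw [Polynomial.revAt_eq_self_of_lt (by omega), hPc, if_neg hmd]
        refine Finset.sum_eq_zero fun k _ => ?_
        rw [hp _ (by omega), mul_zero]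
  · rintro ⟨P, Q, d, hPd, hQd, hP0, hQ0, hratio, hQfp, hQfm⟩
    have hQle : Q.natDegree ≤ d := le_of_eq hQd
    have hPle : P.natDegree ≤ d := le_of_eq hPd
    have hQne : Q ≠ 0 := fun h => hQ0 (by simp [h])
    -- the fp convolution identity
    have hA : ∀ n : ℤ, ∑ k ∈ Finset.range (d + 1), Q.coeff k * fp (n - k)
        = if 0 ≤ n then P.coeff n.toNat else 0 := by
      intro n
      by_cases hn : 0 ≤ n
      · obtain ⟨m, rfl⟩ : ∃ m : ℕ, n = (m : ℤ) := ⟨n.toNat, (Int.toNat_of_nonneg hn).symm⟩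
        have hcv := conv_coeff Q d hQle fp hp m
        rw [hQfp, Polynomial.coeff_coe] at hcv
        rw [if_pos hn, Int.toNat_natCast, ← hcv]
      · rw [if_neg hn]
        refine Finset.sum_eq_zero fun k _ => ?_
        rw [hp _ (by omega), mul_zero]
    -- the fm convolution identity
    have hB : ∀ n : ℤ, ∑ k ∈ Finset.range (d + 1), Q.coeff k * fm (n - k)
        = if 0 ≤ n then P.coeff n.toNat else 0 := by
      intro n
      by_cases hn : n ≤ (d : ℤ)
      · obtain ⟨m, hmn⟩ : ∃ m : ℕ, (m : ℤ) = (d : ℤ) - n := ⟨((d : ℤ) - n).toNat, by omega⟩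
        have hcv : (PowerSeries.coeff m)
            (((Polynomial.reflect d Q : Polynomial ℂ) : PowerSeries ℂ) *
              PowerSeries.mk (fun r : ℕ => fm (-(r : ℤ))))
            = ∑ k ∈ Finset.range (d + 1), (Polynomial.reflect d Q).coeff k * fm (-((m : ℤ) - k)) :=
          conv_coeff _ d (reflect_le hQle) (fun t => fm (-t)) (fun r hr => hm _ (by omega)) m
        rw [hQfm, Polynomial.coeff_coe, Polynomial.coeff_reflect, reflect_sum] at hcv
        have hsum : ∑ k ∈ Finset.range (d + 1), Q.coeff k * fm (((d : ℤ) - m) - k)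
            = ∑ k ∈ Finset.range (d + 1), Q.coeff k * fm (n - k) := by
          refine Finset.sum_congr rfl fun k _ => ?_
          rw [show ((d : ℤ) - m) - k = n - k by omega]
        rw [hsum] at hcv
        rw [← hcv]
        by_cases hn0 : 0 ≤ n
        · rw [if_pos hn0, Polynomial.revAt_le (by omega : m ≤ d)]
          congr 1
          omega
        · rw [if_neg hn0, Polynomial.revAt_eq_self_of_lt (by omega : d < m)]
          exact Polynomial.coeff_eq_zero_of_natDegree_lt (by omega)
      · push_neg at hn
        rw [if_pos (by omega), Polynomial.coeff_eq_zero_of_natDegree_lt (by omega)]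
        refine Finset.sum_eq_zero fun k hk => ?_
        rw [Finset.mem_range, Nat.lt_succ_iff] at hk
        rw [hm _ (by omega), mul_zero]
    have hG : ∀ n : ℤ, ∑ k ∈ Finset.range (d + 1), Q.coeff k * (fp (n - k) - fm (n - k)) = 0 := by
      intro n
      have e : ∑ k ∈ Finset.range (d + 1), Q.coeff k * (fp (n - k) - fm (n - k))
          = (∑ k ∈ Finset.range (d + 1), Q.coeff k * fp (n - k))
            - ∑ k ∈ Finset.range (d + 1), Q.coeff k * fm (n - k) := by
        rw [← Finset.sum_sub_distrib]
        exact Finset.sum_congr rfl fun k _ => mul_sub _ _ _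
      rw [e, hA n, hB n, sub_self]
    refine ⟨d + 1, by omega, fun j => Q.coeff (d + 1 - j), ?_, ?_, ?_⟩
    · show Q.coeff (d + 1 - 1) ≠ 0
      rw [show d + 1 - 1 = d by omega, ← hQd]
      exact Polynomial.leadingCoeff_ne_zero.2 hQne
    · show Q.coeff (d + 1 - (d + 1)) ≠ 0
      rw [Nat.sub_self, Polynomial.coeff_zero_eq_eval_zero]
      exact hQ0
    · intro s
      have key := icc_range_sum (d + 1)
        (fun j => Q.coeff (d + 1 - j) * (fp ((j : ℤ) + s) - fm ((j : ℤ) + s)))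
        (fun k => Q.coeff k * (fp ((s + (d : ℤ) + 1) - k) - fm ((s + (d : ℤ) + 1) - k)))
        (fun j h1 h2 => by
          beta_reduce
          rw [show ((j : ℤ)) + s = (s + (d : ℤ) + 1) - ((d + 1 - j : ℕ) : ℤ) by omega])
      exact key.trans (hG (s + (d : ℤ) + 1))
end

section
/- (Freeness of the group of ℓ-roots, asserted in §3.3 of the paper.) Let g be a finite-dimensional complex simple Lie algebra with Cartan matrix C, minimal symmetrizer D = diag(r_1,…,r_N) and symmetrized Cartan matrix B = DC, and let q ∈ ℂ be transcendental over ℚ. Then the simple ℓ-roots A_{j,a} (j ∈ I, a ∈ ℂ^×) are multiplicatively independent: if n : I × ℂ^× → ℤ is a finitely supported function such that ∏_{(j,a)} (A_{j,a})^{n(j,a)} = (1,…,1) componentwise in (ℂ(u)^×)^I, then n(j,a) = 0 for all (j,a). Equivalently, the group Q generated by the A_{j,a} inside (ℂ(u)^×)^I is free abelian on the generators A_{j,a}. -/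
open scoped BigOperators

open Polynomial in
private lemma aux_lin_ne_zero {K : Type*} [Field K] (b : K) : (1 - C b * X : K[X]) ≠ 0 := by
  intro h
  have h0 := congrArg (fun p : K[X] => p.eval 0) h
  simp at h0

open Polynomial in
private lemma aux_rm_prod {K : Type*} [Field K] (x : K) {ι : Type*} (s : Finset ι)
    (f : ι → K[X]) (hf : ∀ a ∈ s, f a ≠ 0) :
    rootMultiplicity x (∏ a ∈ s, f a) = ∑ a ∈ s, rootMultiplicity x (f a) := by
  classical
  induction s using Finset.cons_induction with
  | empty =>
      simp only [Finset.prod_empty, Finset.sum_empty]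
      exact rootMultiplicity_eq_zero (by simp [Polynomial.IsRoot])
  | cons a s ha ih =>
      have h1 : f a ≠ 0 := hf a (Finset.mem_cons_self a s)
      have h2 : (∏ b ∈ s, f b) ≠ 0 :=
        Finset.prod_ne_zero_iff.2 fun b hb => hf b (Finset.mem_cons_of_mem hb)
      rw [Finset.prod_cons, Finset.sum_cons,
        Polynomial.rootMultiplicity_mul (mul_ne_zero h1 h2),
        ih (fun b hb => hf b (Finset.mem_cons_of_mem hb))]

open Polynomial in
private lemma aux_rm_pow {K : Type*} [Field K] (x : K) (p : K[X]) (hp : p ≠ 0) (k : ℕ) :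
    rootMultiplicity x (p ^ k) = k * rootMultiplicity x p := by
  induction k with
  | zero =>
      simp only [pow_zero, Nat.zero_mul]
      exact rootMultiplicity_eq_zero (by simp [Polynomial.IsRoot])
  | succ k ih =>
      rw [pow_succ, Polynomial.rootMultiplicity_mul (mul_ne_zero (pow_ne_zero _ hp) hp), ih]
      ring

open Polynomial in
private lemma aux_rm_lin {K : Type*} [Field K] {b c₀ : K} [Decidable (b = c₀)] (hc : c₀ ≠ 0) :
    rootMultiplicity c₀⁻¹ (1 - C b * X : K[X]) = if b = c₀ then 1 else 0 := by
  by_cases hb : b = c₀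
  · subst hb
    have hb0 : b ≠ 0 := hc
    have hfac : (1 - C b * X : K[X]) = C (-b) * (X - C b⁻¹) := by
      have h1 : (C (-b) * (X - C b⁻¹) : K[X]) = -(C b * X) + C (b * b⁻¹) := by
        rw [map_neg, C_mul]; ring
      rw [h1, mul_inv_cancel₀ hb0, map_one]; ring
    rw [hfac,
      Polynomial.rootMultiplicity_mul
        (mul_ne_zero (by simpa [Polynomial.C_eq_zero] using neg_ne_zero.mpr hb0)
          (Polynomial.X_sub_C_ne_zero b⁻¹)),
      Polynomial.rootMultiplicity_C, Polynomial.rootMultiplicity_X_sub_C_self, if_pos rfl]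
  · rw [if_neg hb]
    apply rootMultiplicity_eq_zero
    simp only [Polynomial.IsRoot, eval_sub, eval_one, eval_mul, eval_C, eval_X]
    intro h
    apply hb
    have h2 : (1 : K) = b * c₀⁻¹ := sub_eq_zero.mp h
    exact (mul_inv_eq_one₀ hc).mp h2.symm

open Polynomial in
private lemma aux_coeff_sum {ι : Type*} (s : Finset ι) (c : ι → ℚ) (a : ι → ℕ) (e : ℕ) :
    (∑ p ∈ s, C (c p) * X ^ a p).coeff e = ∑ p ∈ s.filter (fun p => a p = e), c p := by
  classical
  rw [Polynomial.finset_sum_coeff, Finset.sum_filter]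
  refine Finset.sum_congr rfl fun p _ => ?_
  rw [Polynomial.coeff_C_mul, Polynomial.coeff_X_pow]
  rcases eq_or_ne (a p) e with h | h
  · simp [h]
  · rw [if_neg (fun he => h he.symm), if_neg h, mul_zero]

/-- **Freeness of the group of ℓ-roots** (§3.3).  Let `C` be the Cartan matrix of a
finite-dimensional complex simple Lie algebra of rank `N` (diagonal entries `2`,
nonpositive off-diagonal entries, `C i j = 0 ↔ C j i = 0`), `D = diag(r 1, …, r N)` the
minimal symmetrizer (the `r i` are relatively prime positive integers) and `B = D * C`
the symmetrized Cartan matrix, which is symmetric and positive definite.  Let `q ∈ ℂ` be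
transcendental over `ℚ`.  For `j ∈ I` and `a ∈ ℂˣ`, the simple ℓ-root `A_{j,a}` is the
`I`-tuple of rational functions whose `i`-th component is
`q^{B j i} (1 - q^{-B j i} a u) / (1 - q^{B j i} a u)`.  Then the `A_{j,a}` are
multiplicatively independent: any finitely supported `ℤ`-valued exponent function `n` on
pairs `(j, a)` (with `a ≠ 0`) whose corresponding product is componentwise `1` in
`ℂ(u)ˣ` must vanish; i.e. the group `Q` they generate is free abelian on them. -/
theorem ell_roots_multiplicatively_independent
    (N : ℕ) (hN : 0 < N)
    (C : Matrix (Fin N) (Fin N) ℤ)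
    (hdiag : ∀ i, C i i = 2)
    (hoff : ∀ i j, i ≠ j → C i j ≤ 0)
    (hzero : ∀ i j, C i j = 0 ↔ C j i = 0)
    (r : Fin N → ℕ) (hr : ∀ i, 0 < r i)
    (hcop : Finset.univ.gcd r = 1)
    (B : Matrix (Fin N) (Fin N) ℤ)
    (hB : ∀ i j, B i j = (r i : ℤ) * C i j)
    (hsymm : B.IsSymm)
    (hposdef : ∀ v : Fin N → ℤ, v ≠ 0 → 0 < ∑ i : Fin N, ∑ j : Fin N, v i * B i j * v j)
    (q : ℂ) (hq : Transcendental ℚ q)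
    (n : (Fin N × ℂ) →₀ ℤ)
    (hsupp : ∀ p ∈ n.support, p.2 ≠ 0)
    (hprod : ∀ i : Fin N,
      (∏ p ∈ n.support,
        ((RatFunc.C (q ^ (B p.1 i)) *
            (1 - RatFunc.C (q ^ (-(B p.1 i)) * p.2) * RatFunc.X) /
            (1 - RatFunc.C (q ^ (B p.1 i) * p.2) * RatFunc.X)) ^ (n p))) = 1) :
    n = 0 := by
  classical
  have hq0 : q ≠ 0 := by
    intro h; exact hq (h ▸ isAlgebraic_zero)
  have hqpow : ∀ e : ℕ, 0 < e → q ^ e ≠ 1 := by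
    intro e he h1
    apply hq
    refine ⟨Polynomial.X ^ e - 1, ?_, ?_⟩
    · intro hP
      have h2 := congrArg (fun p : Polynomial ℚ => p.coeff e) hP
      simp [Polynomial.coeff_X_pow, Polynomial.coeff_one, Nat.pos_iff_ne_zero.mp he] at h2
    · simp [h1]
  have hq1 : ∀ d : ℤ, q ^ d = 1 → d = 0 := by
    intro d hd
    by_contra hd0
    rcases lt_or_gt_of_ne hd0 with hlt | hgt
    · have h3 : q ^ ((-d).toNat) = 1 := by
        have h4 : q ^ (-d) = 1 := by rw [zpow_neg, hd, inv_one]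
        rw [← zpow_natCast, Int.toNat_of_nonneg (by omega)]; exact h4
      exact hqpow _ (by omega) h3
    · have h3 : q ^ (d.toNat) = 1 := by
        rw [← zpow_natCast, Int.toNat_of_nonneg (by omega)]; exact hd
      exact hqpow _ (by omega) h3
  have hqinj : ∀ k l : ℤ, q ^ k = q ^ l → k = l := by
    intro k l hkl
    have h1 : q ^ (k - l) = 1 := by
      rw [zpow_sub₀ hq0, hkl, div_self (zpow_ne_zero _ hq0)]
    have := hq1 _ h1; omega
  -- Step A
  have E' : ∀ (i : Fin N) (c₀ : ℂ), c₀ ≠ 0 →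
      ∑ p ∈ n.support, (n p) *
        ((if q ^ (-(B p.1 i)) * p.2 = c₀ then (1 : ℤ) else 0)
          - (if q ^ (B p.1 i) * p.2 = c₀ then (1 : ℤ) else 0)) = 0 := by
    intro i c₀ hc₀
    set g : Fin N × ℂ → Polynomial ℂ := fun p =>
      Polynomial.C (q ^ (B p.1 i)) *
        (1 - Polynomial.C (q ^ (-(B p.1 i)) * p.2) * Polynomial.X) with hgdef
    set h : Fin N × ℂ → Polynomial ℂ := fun p =>
      1 - Polynomial.C (q ^ (B p.1 i) * p.2) * Polynomial.X with hhdef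
    have hCne : ∀ p : Fin N × ℂ, (Polynomial.C (q ^ (B p.1 i)) : Polynomial ℂ) ≠ 0 := by
      intro p
      simpa [Polynomial.C_eq_zero] using zpow_ne_zero (B p.1 i) hq0
    have hg0 : ∀ p, g p ≠ 0 := fun p => mul_ne_zero (hCne p) (aux_lin_ne_zero _)
    have hh0 : ∀ p, h p ≠ 0 := fun p => aux_lin_ne_zero _
    set Np : Fin N × ℂ → Polynomial ℂ := fun p =>
      if 0 ≤ n p then g p ^ (n p).toNat else h p ^ (-(n p)).toNat with hNpdef
    set Dp : Fin N × ℂ → Polynomial ℂ := fun p =>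
      if 0 ≤ n p then h p ^ (n p).toNat else g p ^ (-(n p)).toNat with hDpdef
    have hN0 : ∀ p, Np p ≠ 0 := by
      intro p
      by_cases hnp : 0 ≤ n p <;>
        simp [hNpdef, hnp, pow_ne_zero, hg0 p, hh0 p]
    have hD0 : ∀ p, Dp p ≠ 0 := by
      intro p
      by_cases hnp : 0 ≤ n p <;>
        simp [hDpdef, hnp, pow_ne_zero, hg0 p, hh0 p]
    have key : (∏ p ∈ n.support, Np p) = ∏ p ∈ n.support, Dp p := by
      have hfac : ∀ p ∈ n.support,
          (RatFunc.C (q ^ (B p.1 i)) *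
              (1 - RatFunc.C (q ^ (-(B p.1 i)) * p.2) * RatFunc.X) /
              (1 - RatFunc.C (q ^ (B p.1 i) * p.2) * RatFunc.X)) ^ (n p)
            = algebraMap (Polynomial ℂ) (RatFunc ℂ) (Np p) /
              algebraMap (Polynomial ℂ) (RatFunc ℂ) (Dp p) := by
        intro p _
        have hbase : (RatFunc.C (q ^ (B p.1 i)) *
              (1 - RatFunc.C (q ^ (-(B p.1 i)) * p.2) * RatFunc.X) /
              (1 - RatFunc.C (q ^ (B p.1 i) * p.2) * RatFunc.X))
            = algebraMap (Polynomial ℂ) (RatFunc ℂ) (g p) /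
              algebraMap (Polynomial ℂ) (RatFunc ℂ) (h p) := by
          simp [hgdef, hhdef, map_mul, map_sub, map_one, RatFunc.algebraMap_C,
            RatFunc.algebraMap_X]
        rw [hbase]
        rcases le_or_gt 0 (n p) with hnp | hnp
        · have hnn : n p = (((n p).toNat : ℕ) : ℤ) := (Int.toNat_of_nonneg hnp).symm
          simp only [hNpdef, hDpdef, if_pos hnp]
          conv_lhs => rw [hnn]
          rw [zpow_natCast, div_pow, map_pow, map_pow]
        · have hneg : n p = -(((-(n p)).toNat : ℤ)) := by omega
          simp only [hNpdef, hDpdef, if_neg (not_le.mpr hnp)]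
          conv_lhs => rw [hneg]
          rw [zpow_neg, zpow_natCast, div_pow, map_pow, map_pow, inv_div]
      have h2 : algebraMap (Polynomial ℂ) (RatFunc ℂ) (∏ p ∈ n.support, Np p) /
          algebraMap (Polynomial ℂ) (RatFunc ℂ) (∏ p ∈ n.support, Dp p) = 1 := by
        rw [map_prod, map_prod, ← Finset.prod_div_distrib, ← hprod i]
        exact (Finset.prod_congr rfl hfac).symm
      have hDne : algebraMap (Polynomial ℂ) (RatFunc ℂ) (∏ p ∈ n.support, Dp p) ≠ 0 :=
        RatFunc.algebraMap_ne_zero (Finset.prod_ne_zero_iff.2 fun p _ => hD0 p)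
      exact RatFunc.algebraMap_injective ℂ ((div_eq_one_iff_eq hDne).mp h2)
    have hrm := congrArg (Polynomial.rootMultiplicity c₀⁻¹) key
    rw [aux_rm_prod _ _ _ (fun p _ => hN0 p), aux_rm_prod _ _ _ (fun p _ => hD0 p)] at hrm
    have hrg : ∀ p : Fin N × ℂ, Polynomial.rootMultiplicity c₀⁻¹ (g p)
        = if q ^ (-(B p.1 i)) * p.2 = c₀ then 1 else 0 := by
      intro p
      rw [hgdef]
      simp only
      rw [Polynomial.rootMultiplicity_mul (mul_ne_zero (hCne p) (aux_lin_ne_zero _)),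
        Polynomial.rootMultiplicity_C, aux_rm_lin hc₀, zero_add]
    have hrh : ∀ p : Fin N × ℂ, Polynomial.rootMultiplicity c₀⁻¹ (h p)
        = if q ^ (B p.1 i) * p.2 = c₀ then 1 else 0 := by
      intro p
      rw [hhdef]
      simp only
      rw [aux_rm_lin hc₀]
    have hrmZ : (∑ p ∈ n.support, (Polynomial.rootMultiplicity c₀⁻¹ (Np p) : ℤ))
        = ∑ p ∈ n.support, (Polynomial.rootMultiplicity c₀⁻¹ (Dp p) : ℤ) := by
      exact_mod_cast congrArg (fun t : ℕ => (t : ℤ)) hrm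
    have hper : ∀ p : Fin N × ℂ,
        (n p) * ((if q ^ (-(B p.1 i)) * p.2 = c₀ then (1 : ℤ) else 0)
          - (if q ^ (B p.1 i) * p.2 = c₀ then (1 : ℤ) else 0))
        = (Polynomial.rootMultiplicity c₀⁻¹ (Np p) : ℤ)
          - (Polynomial.rootMultiplicity c₀⁻¹ (Dp p) : ℤ) := by
      intro p
      rcases le_or_gt 0 (n p) with hnp | hnp
      · simp only [hNpdef, hDpdef, if_pos hnp]
        rw [aux_rm_pow _ _ (hg0 p), aux_rm_pow _ _ (hh0 p), hrg p, hrh p]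
        push_cast [apply_ite (fun t : ℕ => (t : ℤ)), Int.toNat_of_nonneg hnp]
        ring
      · simp only [hNpdef, hDpdef, if_neg (not_le.mpr hnp)]
        rw [aux_rm_pow _ _ (hg0 p), aux_rm_pow _ _ (hh0 p), hrg p, hrh p]
        push_cast [apply_ite (fun t : ℕ => (t : ℤ)),
          Int.toNat_of_nonneg (by omega : (0:ℤ) ≤ -(n p))]
        ring
    calc ∑ p ∈ n.support, (n p) *
          ((if q ^ (-(B p.1 i)) * p.2 = c₀ then (1 : ℤ) else 0)
            - (if q ^ (B p.1 i) * p.2 = c₀ then (1 : ℤ) else 0))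
        = ∑ p ∈ n.support, ((Polynomial.rootMultiplicity c₀⁻¹ (Np p) : ℤ)
            - (Polynomial.rootMultiplicity c₀⁻¹ (Dp p) : ℤ)) :=
          Finset.sum_congr rfl fun p _ => hper p
      _ = 0 := by rw [Finset.sum_sub_distrib, hrmZ, sub_self]
  
  -- Step B
  ext p₀
  rw [Finsupp.coe_zero, Pi.zero_apply]
  by_contra hnp₀
  have hp₀ : p₀ ∈ n.support := Finsupp.mem_support_iff.mpr hnp₀
  have ha₀ : p₀.2 ≠ 0 := hsupp p₀ hp₀
  set a₀ := p₀.2 with ha₀def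
  set InC : Fin N × ℂ → Prop := fun p => ∃ m : ℤ, p.2 = q ^ m * a₀ with hInCdef
  set S := n.support.filter InC with hSdef
  have hp₀S : p₀ ∈ S := Finset.mem_filter.2 ⟨hp₀, ⟨0, by simp [ha₀def]⟩⟩
  set mf : Fin N × ℂ → ℤ := fun p => if hc : InC p then hc.choose else 0 with hmfdef
  have hmf : ∀ p ∈ S, p.2 = q ^ (mf p) * a₀ := by
    intro p hp
    have hc : InC p := (Finset.mem_filter.1 hp).2
    simp only [hmfdef, dif_pos hc]
    exact hc.choose_spec
  -- the fiberwise conditions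
  have hstar : ∀ (i : Fin N) (c : ℤ),
      ∑ p ∈ S.filter (fun p => mf p - B p.1 i = c), n p
      = ∑ p ∈ S.filter (fun p => mf p + B p.1 i = c), n p := by
    intro i c
    have hc₀ : (q ^ c * a₀ : ℂ) ≠ 0 := mul_ne_zero (zpow_ne_zero _ hq0) ha₀
    have hE := E' i (q ^ c * a₀) hc₀
    rw [← Finset.sum_filter_add_sum_filter_not n.support InC] at hE
    have hz : ∑ p ∈ n.support.filter (fun p => ¬ InC p), (n p) *
        ((if q ^ (-(B p.1 i)) * p.2 = q ^ c * a₀ then (1 : ℤ) else 0)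
          - (if q ^ (B p.1 i) * p.2 = q ^ c * a₀ then (1 : ℤ) else 0)) = 0 := by
      refine Finset.sum_eq_zero fun p hp => ?_
      obtain ⟨hps, hnc⟩ := Finset.mem_filter.1 hp
      have h1 : ¬ (q ^ (-(B p.1 i)) * p.2 = q ^ c * a₀) := by
        intro hmm
        refine hnc ⟨B p.1 i + c, ?_⟩
        rw [zpow_add₀ hq0, mul_assoc, ← hmm, ← mul_assoc, ← zpow_add₀ hq0]
        simp
      have h2 : ¬ (q ^ (B p.1 i) * p.2 = q ^ c * a₀) := by
        intro hmm
        refine hnc ⟨-(B p.1 i) + c, ?_⟩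
        rw [zpow_add₀ hq0, mul_assoc, ← hmm, ← mul_assoc, ← zpow_add₀ hq0]
        simp
      rw [if_neg h1, if_neg h2, sub_self, mul_zero]
    rw [hz, add_zero] at hE
    have hcongr : ∀ p ∈ n.support.filter InC, (n p) *
        ((if q ^ (-(B p.1 i)) * p.2 = q ^ c * a₀ then (1 : ℤ) else 0)
          - (if q ^ (B p.1 i) * p.2 = q ^ c * a₀ then (1 : ℤ) else 0))
        = (n p) * ((if mf p - B p.1 i = c then (1 : ℤ) else 0)
          - (if mf p + B p.1 i = c then (1 : ℤ) else 0)) := by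
      intro p hp
      have hiff : ∀ b : ℤ, (q ^ b * p.2 = q ^ c * a₀) ↔ (b + mf p = c) := by
        intro b
        rw [hmf p hp, ← mul_assoc, ← zpow_add₀ hq0]
        constructor
        · intro hh
          exact hqinj _ _ (mul_right_cancel₀ ha₀ hh)
        · intro hh; rw [hh]
      have e1 : (q ^ (-(B p.1 i)) * p.2 = q ^ c * a₀) ↔ (mf p - B p.1 i = c) :=
        (hiff _).trans (by constructor <;> intro <;> omega)
      have e2 : (q ^ (B p.1 i) * p.2 = q ^ c * a₀) ↔ (mf p + B p.1 i = c) :=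
        (hiff _).trans (by constructor <;> intro <;> omega)
      rw [if_congr e1 rfl rfl, if_congr e2 rfl rfl]
    rw [Finset.sum_congr rfl hcongr] at hE
    have hsplit : ∀ (dd : Fin N × ℂ → ℤ),
        ∑ p ∈ S, (n p) * (if dd p = c then (1 : ℤ) else 0)
          = ∑ p ∈ S.filter (fun p => dd p = c), n p := by
      intro dd
      conv_rhs => rw [Finset.sum_filter]
      exact Finset.sum_congr rfl fun p _ => by
        rcases eq_or_ne (dd p) c with hh | hh
        · rw [if_pos hh, if_pos hh, mul_one]
        · rw [if_neg hh, if_neg hh, mul_zero]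
    have hE2 : ∑ p ∈ S, (n p) * (if mf p - B p.1 i = c then (1 : ℤ) else 0)
        - ∑ p ∈ S, (n p) * (if mf p + B p.1 i = c then (1 : ℤ) else 0) = 0 := by
      rw [← Finset.sum_sub_distrib]
      calc _ = ∑ p ∈ S, (n p) * ((if mf p - B p.1 i = c then (1 : ℤ) else 0)
            - (if mf p + B p.1 i = c then (1 : ℤ) else 0)) :=
          Finset.sum_congr rfl fun p _ => by ring
        _ = 0 := hE
    rw [hsplit (fun p => mf p - B p.1 i), hsplit (fun p => mf p + B p.1 i)] at hE2
    exact sub_eq_zero.mp hE2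
  -- bounds
  set K₁ : ℤ := ∑ p ∈ S, |mf p| with hK₁def
  have hK₁ : ∀ p ∈ S, 0 ≤ mf p + K₁ := by
    intro p hp
    have h1 : |mf p| ≤ K₁ := Finset.single_le_sum (fun p _ => abs_nonneg (mf p)) hp
    have h2 : -(mf p) ≤ |mf p| := neg_le_abs _
    linarith
  set K₂ : ℤ := ∑ j : Fin N, ∑ i : Fin N, |B j i| with hK₂def
  have hK₂ : ∀ j i : Fin N, |B j i| ≤ K₂ := by
    intro j i
    have h1 : |B j i| ≤ ∑ i' : Fin N, |B j i'| :=
      Finset.single_le_sum (f := fun i' => |B j i'|) (fun _ _ => abs_nonneg _)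
        (Finset.mem_univ i)
    have h2 : ∑ i' : Fin N, |B j i'| ≤ K₂ :=
      Finset.single_le_sum (f := fun j' => ∑ i' : Fin N, |B j' i'|)
        (fun _ _ => Finset.sum_nonneg fun _ _ => abs_nonneg _) (Finset.mem_univ j)
    linarith
  set me : Fin N × ℂ → ℕ := fun p => (mf p + K₁).toNat with hmedef
  set ca : Fin N → Fin N → ℕ := fun j i => (K₂ - B j i).toNat with hcadef
  set da : Fin N → Fin N → ℕ := fun j i => (K₂ + B j i).toNat with hdadef
  set fhat : Fin N → Polynomial ℚ := fun j =>
    ∑ p ∈ S.filter (fun p => p.1 = j), Polynomial.C ((n p : ℚ)) * Polynomial.X ^ me p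
    with hfdef
  set A : Matrix (Fin N) (Fin N) (Polynomial ℚ) := Matrix.of fun j i =>
    Polynomial.X ^ ca j i - Polynomial.X ^ da j i with hAdef
  have hmain : ∀ i : Fin N, ∑ j : Fin N, fhat j * A j i = 0 := by
    intro i
    have h2 : ∀ j : Fin N, fhat j * A j i = ∑ p ∈ S.filter (fun p => p.1 = j),
        (Polynomial.C ((n p : ℚ)) * Polynomial.X ^ (me p + ca p.1 i)
          - Polynomial.C ((n p : ℚ)) * Polynomial.X ^ (me p + da p.1 i)) := by
      intro j
      rw [hfdef]
      simp only
      rw [Finset.sum_mul]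
      refine Finset.sum_congr rfl fun p hp => ?_
      have hpj : p.1 = j := (Finset.mem_filter.1 hp).2
      subst hpj
      simp only [hAdef, Matrix.of_apply]
      rw [mul_sub, pow_add, pow_add]
      ring
    have h1 : ∑ j : Fin N, fhat j * A j i
        = ∑ p ∈ S, Polynomial.C ((n p : ℚ)) * Polynomial.X ^ (me p + ca p.1 i)
          - ∑ p ∈ S, Polynomial.C ((n p : ℚ)) * Polynomial.X ^ (me p + da p.1 i) := by
      rw [← Finset.sum_sub_distrib]
      calc ∑ j : Fin N, fhat j * A j i
          = ∑ j : Fin N, ∑ p ∈ S.filter (fun p => p.1 = j),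
            (Polynomial.C ((n p : ℚ)) * Polynomial.X ^ (me p + ca p.1 i)
              - Polynomial.C ((n p : ℚ)) * Polynomial.X ^ (me p + da p.1 i)) :=
          Finset.sum_congr rfl fun j _ => h2 j
        _ = _ := Finset.sum_fiberwise_of_maps_to (fun p _ => Finset.mem_univ p.1) _
    rw [h1, sub_eq_zero]
    ext e
    rw [aux_coeff_sum, aux_coeff_sum]
    have hc := hstar i ((e : ℤ) - K₁ - K₂)
    have hfil1 : S.filter (fun p => me p + ca p.1 i = e)
        = S.filter (fun p => mf p - B p.1 i = (e : ℤ) - K₁ - K₂) := by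
      refine Finset.filter_congr fun p hp => ?_
      have h1 := hK₁ p hp
      have h2 := abs_le.mp (hK₂ p.1 i)
      simp only [hmedef, hcadef]
      constructor <;> intro <;> omega
    have hfil2 : S.filter (fun p => me p + da p.1 i = e)
        = S.filter (fun p => mf p + B p.1 i = (e : ℤ) - K₁ - K₂) := by
      refine Finset.filter_congr fun p hp => ?_
      have h1 := hK₁ p hp
      have h2 := abs_le.mp (hK₂ p.1 i)
      simp only [hmedef, hdadef]
      constructor <;> intro <;> omega
    rw [hfil1, hfil2]
    exact_mod_cast congrArg (fun z : ℤ => (z : ℚ)) hc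
  -- determinant of A is nonzero
  set V : Matrix (Fin N) (Fin N) (Polynomial ℚ) := Matrix.of fun j i =>
    (if 0 ≤ B j i then (-1 : Polynomial ℚ) else 1) *
      (Polynomial.X ^ ((K₂ - |B j i|).toNat)
        * ∑ k ∈ Finset.range (2 * (B j i).natAbs), Polynomial.X ^ k) with hVdef
  have hAV : A = (Polynomial.X - 1 : Polynomial ℚ) • V := by
    refine Matrix.ext fun j i => ?_
    simp only [hAdef, hVdef, Matrix.smul_apply, Matrix.of_apply, smul_eq_mul]
    have hK := abs_le.mp (hK₂ j i)
    have hg := geom_sum_mul (Polynomial.X : Polynomial ℚ) (2 * (B j i).natAbs)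
    rcases le_or_gt 0 (B j i) with hb | hb
    · rw [if_pos hb]
      have h2 : |B j i| = B j i := abs_of_nonneg hb
      have h3 : da j i = ca j i + 2 * (B j i).natAbs := by
        simp only [hcadef, hdadef]; omega
      have h5 : (K₂ - |B j i|).toNat = ca j i := by
        simp only [hcadef]; rw [h2]
      rw [h3, h5, pow_add]
      linear_combination ((Polynomial.X : Polynomial ℚ) ^ ca j i) * hg
    · rw [if_neg (not_le.mpr hb)]
      have h2 : |B j i| = -(B j i) := abs_of_neg hb
      have h3 : ca j i = da j i + 2 * (B j i).natAbs := by
        simp only [hcadef, hdadef]; omega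
      have h5 : (K₂ - |B j i|).toNat = da j i := by
        simp only [hdadef]; rw [h2]; rw [sub_neg_eq_add]
      rw [h3, h5, pow_add]
      linear_combination (-(Polynomial.X : Polynomial ℚ) ^ da j i) * hg
  have hXone : (Polynomial.X - 1 : Polynomial ℚ) ≠ 0 := by
    intro hcon
    have h0 := congrArg (fun p : Polynomial ℚ => p.eval 0) hcon
    simp at h0
  have hdetB : ((B.map (fun z : ℤ => (z : ℚ))).det) ≠ 0 := by
    intro hdet
    obtain ⟨v, hv0, hv⟩ := Matrix.exists_mulVec_eq_zero_iff.mpr hdet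
    set d : ℚ := ∏ l : Fin N, ((v l).den : ℚ) with hddef
    set w : Fin N → ℤ := fun k => (v k).num * ∏ l ∈ Finset.univ.erase k, ((v l).den : ℤ)
      with hwdef
    have hw : ∀ k, (w k : ℚ) = v k * d := by
      intro k
      have hden : ((v k).den : ℚ) ≠ 0 := Nat.cast_ne_zero.mpr (v k).den_nz
      have hkey : v k * ((v k).den : ℚ) = ((v k).num : ℚ) := by
        have hnd := Rat.num_div_den (v k)
        nth_rewrite 1 [← hnd]
        rw [div_mul_cancel₀ _ hden]
      have hsplit : d = ((v k).den : ℚ) * ∏ l ∈ Finset.univ.erase k, ((v l).den : ℚ) := by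
        rw [hddef, ← Finset.mul_prod_erase Finset.univ _ (Finset.mem_univ k)]
      rw [hwdef]
      push_cast
      rw [hsplit, ← mul_assoc, hkey]
    have hw0 : w ≠ 0 := by
      obtain ⟨k, hk⟩ := Function.ne_iff.mp hv0
      intro hcon
      apply hk
      have hwk : w k = 0 := by rw [hcon]; rfl
      have hprodne : (∏ l ∈ Finset.univ.erase k, ((v l).den : ℤ)) ≠ 0 :=
        Finset.prod_ne_zero_iff.2 fun l _ => Int.natCast_ne_zero.mpr (v l).den_nz
      have hnum : (v k).num = 0 := by
        rcases mul_eq_zero.mp (hwk : (v k).num * _ = 0) with hh | hh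
        · exact hh
        · exact absurd hh hprodne
      exact Rat.num_eq_zero.mp hnum
    have hpos := hposdef w hw0
    have hzero2 : ((∑ i : Fin N, ∑ j : Fin N, w i * B i j * w j : ℤ) : ℚ) = 0 := by
      push_cast
      calc ∑ i : Fin N, ∑ j : Fin N, ((w i : ℚ)) * ((B i j : ℤ) : ℚ) * (w j : ℚ)
          = ∑ i : Fin N, (v i * d * d) *
              (∑ j : Fin N, ((B i j : ℤ) : ℚ) * v j) := by
            refine Finset.sum_congr rfl fun i _ => ?_
            rw [Finset.mul_sum]
            refine Finset.sum_congr rfl fun j _ => ?_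
            rw [hw i, hw j]; ring
        _ = 0 := by
            refine Finset.sum_eq_zero fun i _ => ?_
            have hvi := congrFun hv i
            have : ∑ j : Fin N, ((B i j : ℤ) : ℚ) * v j = 0 := by
              simpa [Matrix.mulVec, dotProduct, Matrix.map_apply] using hvi
            rw [this, mul_zero]
    have hzero3 : (∑ i : Fin N, ∑ j : Fin N, w i * B i j * w j) = 0 := by
      exact_mod_cast hzero2
    omega
  have hVmap : (V.map (Polynomial.evalRingHom (1 : ℚ)))
      = (-2 : ℚ) • (B.map fun z : ℤ => (z : ℚ)) := by
    refine Matrix.ext fun j i => ?_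
    simp only [Matrix.map_apply, hVdef, Matrix.of_apply, Matrix.smul_apply, smul_eq_mul,
      Polynomial.coe_evalRingHom]
    rcases le_or_gt 0 (B j i) with hb | hb
    · rw [if_pos hb]
      simp only [Polynomial.eval_mul, Polynomial.eval_pow, Polynomial.eval_X,
        Polynomial.eval_neg, Polynomial.eval_one, Polynomial.eval_finset_sum, one_pow,
        Finset.sum_const, Finset.card_range, nsmul_eq_mul, mul_one]
      have h7 : ((2 * (B j i).natAbs : ℕ) : ℚ) = 2 * ((B j i : ℤ) : ℚ) := by
        have h8 : ((2 * (B j i).natAbs : ℕ) : ℤ) = 2 * B j i := by omega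
        calc ((2 * (B j i).natAbs : ℕ) : ℚ) = (((2 * (B j i).natAbs : ℕ) : ℤ) : ℚ) := by
              norm_cast
          _ = ((2 * B j i : ℤ) : ℚ) := by rw [h8]
          _ = 2 * ((B j i : ℤ) : ℚ) := by push_cast; ring
      rw [h7]; ring
    · rw [if_neg (not_le.mpr hb)]
      simp only [Polynomial.eval_mul, Polynomial.eval_pow, Polynomial.eval_X,
        Polynomial.eval_neg, Polynomial.eval_one, Polynomial.eval_finset_sum, one_pow,
        Finset.sum_const, Finset.card_range, nsmul_eq_mul, mul_one]
      have h7 : ((2 * (B j i).natAbs : ℕ) : ℚ) = -(2 * ((B j i : ℤ) : ℚ)) := by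
        have h8 : ((2 * (B j i).natAbs : ℕ) : ℤ) = -(2 * B j i) := by omega
        calc ((2 * (B j i).natAbs : ℕ) : ℚ) = (((2 * (B j i).natAbs : ℕ) : ℤ) : ℚ) := by
              norm_cast
          _ = ((-(2 * B j i) : ℤ) : ℚ) := by rw [h8]
          _ = -(2 * ((B j i : ℤ) : ℚ)) := by push_cast; ring
      rw [h7]; ring
  have hdetV : V.det ≠ 0 := by
    intro hcon
    have h1 := congrArg (Polynomial.evalRingHom (1 : ℚ)) hcon
    rw [RingHom.map_det, RingHom.mapMatrix_apply, hVmap, map_zero, Matrix.det_smul,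
      Fintype.card_fin] at h1
    exact (mul_ne_zero (pow_ne_zero _ (by norm_num : (-2 : ℚ) ≠ 0)) hdetB) h1
  have hdetA : A.det ≠ 0 := by
    rw [hAV, Matrix.det_smul, Fintype.card_fin]
    exact mul_ne_zero (pow_ne_zero _ hXone) hdetV
  have hf0 : fhat = 0 := by
    by_contra hne
    apply hdetA
    rw [← Matrix.exists_vecMul_eq_zero_iff]
    refine ⟨fhat, hne, ?_⟩
    funext i
    simpa [Matrix.vecMul, dotProduct] using hmain i
  have hcoeff := congrArg (fun f : Polynomial ℚ => f.coeff (me p₀)) (congrFun hf0 p₀.1)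
  simp only [Pi.zero_apply, Polynomial.coeff_zero] at hcoeff
  rw [hfdef] at hcoeff
  simp only [aux_coeff_sum] at hcoeff
  have hmem : p₀ ∈ (S.filter (fun p => p.1 = p₀.1)).filter (fun p => me p = me p₀) := by
    refine Finset.mem_filter.2 ⟨Finset.mem_filter.2 ⟨hp₀S, rfl⟩, rfl⟩
  have huniq : ∀ p ∈ (S.filter (fun p => p.1 = p₀.1)).filter (fun p => me p = me p₀),
      p ≠ p₀ → ((n p : ℚ)) = 0 := by
    intro p hp hne
    exfalso
    apply hne
    obtain ⟨hp1, hp2⟩ := Finset.mem_filter.1 hp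
    obtain ⟨hpS, hpj⟩ := Finset.mem_filter.1 hp1
    have hmfeq : mf p = mf p₀ := by
      have h1 := hK₁ p hpS
      have h2 := hK₁ p₀ hp₀S
      simp only [hmedef] at hp2
      omega
    have hsnd : p.2 = p₀.2 := by
      rw [hmf p hpS, hmf p₀ hp₀S, hmfeq]
    exact Prod.ext hpj hsnd
  rw [Finset.sum_eq_single_of_mem p₀ hmem huniq] at hcoeff
  exact hnp₀ (by exact_mod_cast hcoeff)
end

section
/- (Remark of §4.1 of the paper: non-uniqueness of the factorization into strings in general position.) Let q ∈ ℂ be transcendental over ℚ and a ∈ ℂ^×. Then S(q^{−5}, a)·S(q^{−9}, a) = S(q^{−7}, q^{−2}a)·S(q^{−7}, q^{2}a) as rational functions in ℂ(u); moreover the pair (S(q^{−5}, a), S(q^{−9}, a)) is in general position, the pair (S(q^{−7}, q^{−2}a), S(q^{−7}, q^{2}a)) is in general position, and the unordered pair of parameters {(q^{−5}, a), (q^{−9}, a)} is distinct from {(q^{−7}, q^{−2}a), (q^{−7}, q^{2}a)}. Consequently the factorization of a rational function into strings in pairwise general position is not unique. -/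
open Polynomial in
lemma trans_ne_zero' (q : ℂ) (hq : Transcendental ℚ q) : q ≠ 0 := by
  intro h; exact hq (h ▸ isAlgebraic_zero)

open Polynomial in
lemma trans_pow_ne_one' (q : ℂ) (hq : Transcendental ℚ q) (n : ℕ) (hn : n ≠ 0) :
    q ^ n ≠ 1 := by
  intro h
  exact hq ⟨X ^ n - C 1, X_pow_sub_C_ne_zero (Nat.pos_of_ne_zero hn) 1, by simp [h]⟩

lemma trans_zpow_ne_one' (q : ℂ) (hq : Transcendental ℚ q) (n : ℤ) (hn : n ≠ 0) :
    q ^ n ≠ 1 := by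
  rcases n.lt_or_lt_of_ne hn with h | h
  · intro he
    have h2 : q ^ (-n) = 1 := by rw [zpow_neg, he]; simp
    have := trans_pow_ne_one' q hq (-n).toNat (by omega)
    rw [← zpow_natCast, Int.toNat_of_nonneg (by omega)] at this
    exact this h2
  · intro he
    have := trans_pow_ne_one' q hq n.toNat (by omega)
    rw [← zpow_natCast, Int.toNat_of_nonneg (by omega)] at this
    exact this he

lemma trans_zpow_inj' (q : ℂ) (hq : Transcendental ℚ q) {m n : ℤ} (h : q ^ m = q ^ n) :
    m = n := by
  by_contra hmn
  apply trans_zpow_ne_one' q hq (m - n) (by omega)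
  rw [zpow_sub₀ (trans_ne_zero' q hq), h, div_self (zpow_ne_zero _ (trans_ne_zero' q hq))]

lemma zpowA (q a : ℂ) (h0 : q ≠ 0) (m k : ℤ) :
    (q^m)⁻¹ * q⁻¹ * (q^k * a) = q^(-m-1+k) * a := by
  rw [← zpow_neg, ← zpow_neg_one q, ← mul_assoc, ← zpow_add₀ h0, ← zpow_add₀ h0,
    show -m + -1 + k = -m-1+k by ring]

lemma zpowB (q a : ℂ) (h0 : q ≠ 0) (m k : ℤ) :
    q^m * q⁻¹ * (q^k * a) = q^(m-1+k) * a := by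
  rw [← zpow_neg_one q, ← mul_assoc, ← zpow_add₀ h0, ← zpow_add₀ h0,
    show m + -1 + k = m-1+k by ring]

lemma zpowA0 (q a : ℂ) (h0 : q ≠ 0) (m : ℤ) :
    (q^m)⁻¹ * q⁻¹ * a = q^(-m-1) * a := by
  have := zpowA q a h0 m 0; simpa using this

lemma zpowB0 (q a : ℂ) (h0 : q ≠ 0) (m : ℤ) :
    q^m * q⁻¹ * a = q^(m-1) * a := by
  have := zpowB q a h0 m 0; simpa using this

lemma denom_ne (b : ℂ) : (1 : RatFunc ℂ) - RatFunc.C b * RatFunc.X ≠ 0 := by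
  have h : (1 : RatFunc ℂ) - RatFunc.C b * RatFunc.X =
      algebraMap (Polynomial ℂ) (RatFunc ℂ) (1 - Polynomial.C b * Polynomial.X) := by
    simp [map_sub, map_mul, RatFunc.algebraMap_C, RatFunc.algebraMap_X]
  rw [h]
  apply RatFunc.algebraMap_ne_zero
  intro hp
  have := congrArg (Polynomial.eval 0) hp
  simp at this

/-- The string `S(c,a)(u) = c·(1 - c⁻¹q⁻¹au)/(1 - cq⁻¹au)` as a rational function;
for a complex exponent `μ`, the paper's string `S_μ(a)` is `S(q^μ, a)`. -/
noncomputable def stringFn (q c a : ℂ) : RatFunc ℂ :=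
  RatFunc.C c * (1 - RatFunc.C (c⁻¹ * q⁻¹ * a) * RatFunc.X) /
    (1 - RatFunc.C (c * q⁻¹ * a) * RatFunc.X)

/-- The string `S(c,a)` starts at `c⁻¹q⁻¹a`. -/
noncomputable def stringStart (q c a : ℂ) : ℂ := c⁻¹ * q⁻¹ * a

/-- The string `S(c,a)` ends at `cq⁻¹a`. -/
noncomputable def stringEnd (q c a : ℂ) : ℂ := c * q⁻¹ * a

/-- The string `S(c,a)` is finite iff `c² = q^{2m}` for some `m ∈ ℤ≥0`. -/
def IsFiniteString (q c : ℂ) : Prop := ∃ m : ℕ, c ^ 2 = q ^ (2 * m)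

/-- The set associated to a finite string `S(c,a)`: if `c² = q^{2m}` (`m ∈ ℤ≥0`), it is
`{c⁻¹q⁻¹a·q^{2t} : 0 ≤ t ≤ m}`. -/
def stringSet (q c a : ℂ) : Set ℂ :=
  {z | ∃ m t : ℕ, c ^ 2 = q ^ (2 * m) ∧ t ≤ m ∧ z = c⁻¹ * q⁻¹ * a * q ^ (2 * t)}


lemma startz (q a : ℂ) (h0 : q ≠ 0) (n : ℤ) : stringStart q (q^n) a = q^(-n-1) * a :=
  zpowA0 q a h0 n

lemma endz (q a : ℂ) (h0 : q ≠ 0) (n : ℤ) : stringEnd q (q^n) a = q^(n-1) * a :=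
  zpowB0 q a h0 n

lemma no_shift (q : ℂ) (hq : Transcendental ℚ q) (a b : ℂ) (ha : a ≠ 0)
    (m n k : ℤ) (hk : b = q ^ k * a) (hmn : ∀ t : ℕ, -m - 1 ≠ n - 1 + k - 2 * t) :
    ¬ ∃ t : ℕ, stringStart q (q^m) a = stringEnd q (q^n) b * (q ^ (2*t))⁻¹ := by
  rintro ⟨t, ht⟩
  have h0 := trans_ne_zero' q hq
  rw [startz q a h0, endz q b h0, hk, show (q ^ (2*t))⁻¹ = q ^ (-(2*(t:ℤ))) by
    rw [zpow_neg]; norm_cast] at ht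
  have expand : q ^ (n - 1 + k - 2*(t:ℤ)) = q^(n-1) * q^k * q^(-(2*(t:ℤ))) := by
    rw [← zpow_add₀ h0, ← zpow_add₀ h0, show n - 1 + k + -(2*(t:ℤ)) = n - 1 + k - 2*t by ring]
  have key : q ^ (-m-1) * a = q ^ (n - 1 + k - 2*(t:ℤ)) * a := by
    rw [ht, expand]; ring
  have := trans_zpow_inj' q hq (mul_right_cancel₀ ha key)
  exact hmn t this

lemma not_fin (q : ℂ) (hq : Transcendental ℚ q) (n : ℤ) (hn : n < 0) :
    ¬ IsFiniteString q (q ^ n) := by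
  rintro ⟨m, hm⟩
  have h0 := trans_ne_zero' q hq
  have h2 : q ^ (n * 2) = q ^ ((2 * m : ℕ) : ℤ) := by
    rw [zpow_natCast, ← hm, ← zpow_natCast (q ^ n) 2, ← zpow_mul]
    norm_num
  have := trans_zpow_inj' q hq h2
  omega

/-- Two strings `S(c₁,a₁)`, `S(c₂,a₂)` are in general position if:
(1) when neither is finite, neither one starts at a point `e·q^{-2t}`, `t ∈ ℤ≥0`,
where `e` is the end of the other; (2) when exactly one is finite, neither the start nor
the end of the non-finite one belongs to the set of the finite one; (3) when both are
finite, their sets are either disjoint or one is contained in the other. -/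
def InGeneralPosition (q c₁ a₁ c₂ a₂ : ℂ) : Prop :=
  (¬ IsFiniteString q c₁ → ¬ IsFiniteString q c₂ →
    (¬ ∃ t : ℕ, stringStart q c₁ a₁ = stringEnd q c₂ a₂ * (q ^ (2 * t))⁻¹) ∧
    (¬ ∃ t : ℕ, stringStart q c₂ a₂ = stringEnd q c₁ a₁ * (q ^ (2 * t))⁻¹)) ∧
  (IsFiniteString q c₁ → ¬ IsFiniteString q c₂ →
    stringStart q c₂ a₂ ∉ stringSet q c₁ a₁ ∧ stringEnd q c₂ a₂ ∉ stringSet q c₁ a₁) ∧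
  (IsFiniteString q c₂ → ¬ IsFiniteString q c₁ →
    stringStart q c₁ a₁ ∉ stringSet q c₂ a₂ ∧ stringEnd q c₁ a₁ ∉ stringSet q c₂ a₂) ∧
  (IsFiniteString q c₁ → IsFiniteString q c₂ →
    Disjoint (stringSet q c₁ a₁) (stringSet q c₂ a₂) ∨
    stringSet q c₁ a₁ ⊆ stringSet q c₂ a₂ ∨ stringSet q c₂ a₂ ⊆ stringSet q c₁ a₁)

/-- **Remark of §4.1** (non-uniqueness of the factorization into strings in general
position).  For `q` transcendental over `ℚ` and `a ≠ 0` we have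
`S_{-5}(a)·S_{-9}(a) = S_{-7}(q⁻²a)·S_{-7}(q²a)` in `ℂ(u)`; both pairs are in general
position, yet the two unordered pairs of parameters are distinct.  Hence the
factorization into strings in pairwise general position is not unique. -/
theorem string_factorization_not_unique (q : ℂ) (hq : Transcendental ℚ q)
    (a : ℂ) (ha : a ≠ 0) :
    stringFn q (q ^ (-5 : ℤ)) a * stringFn q (q ^ (-9 : ℤ)) a =
      stringFn q (q ^ (-7 : ℤ)) (q ^ (-2 : ℤ) * a) *
        stringFn q (q ^ (-7 : ℤ)) (q ^ (2 : ℤ) * a) ∧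
    InGeneralPosition q (q ^ (-5 : ℤ)) a (q ^ (-9 : ℤ)) a ∧
    InGeneralPosition q (q ^ (-7 : ℤ)) (q ^ (-2 : ℤ) * a)
      (q ^ (-7 : ℤ)) (q ^ (2 : ℤ) * a) ∧
    ({(q ^ (-5 : ℤ), a), (q ^ (-9 : ℤ), a)} : Set (ℂ × ℂ)) ≠
      {(q ^ (-7 : ℤ), q ^ (-2 : ℤ) * a), (q ^ (-7 : ℤ), q ^ (2 : ℤ) * a)} := by
  have h0 := trans_ne_zero' q hq
  refine ⟨?_, ?_, ?_, ?_⟩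
  · -- the product identity
    have c1 : (q^(-5:ℤ))⁻¹ * q⁻¹ * a = q^(4:ℤ) * a := by rw [zpowA0 q a h0]; norm_num
    have c2 : (q^(-9:ℤ))⁻¹ * q⁻¹ * a = q^(8:ℤ) * a := by rw [zpowA0 q a h0]; norm_num
    have c3 : q^(-5:ℤ) * q⁻¹ * a = q^(-6:ℤ) * a := by rw [zpowB0 q a h0]; norm_num
    have c4 : q^(-9:ℤ) * q⁻¹ * a = q^(-10:ℤ) * a := by rw [zpowB0 q a h0]; norm_num
    have c5 : (q^(-7:ℤ))⁻¹ * q⁻¹ * (q^(-2:ℤ) * a) = q^(4:ℤ) * a := by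
      rw [zpowA q a h0]; norm_num
    have c6 : (q^(-7:ℤ))⁻¹ * q⁻¹ * (q^(2:ℤ) * a) = q^(8:ℤ) * a := by
      rw [zpowA q a h0]; norm_num
    have c7 : q^(-7:ℤ) * q⁻¹ * (q^(-2:ℤ) * a) = q^(-10:ℤ) * a := by
      rw [zpowB q a h0]; norm_num
    have c8 : q^(-7:ℤ) * q⁻¹ * (q^(2:ℤ) * a) = q^(-6:ℤ) * a := by
      rw [zpowB q a h0]; norm_num
    unfold stringFn
    rw [c1, c2, c3, c4, c5, c6, c7, c8]
    rw [div_mul_div_comm, div_mul_div_comm,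
        div_eq_div_iff (mul_ne_zero (denom_ne _) (denom_ne _))
          (mul_ne_zero (denom_ne _) (denom_ne _))]
    have hC : RatFunc.C (q^(-5:ℤ)) * RatFunc.C (q^(-9:ℤ)) =
        RatFunc.C (q^(-7:ℤ)) * RatFunc.C (q^(-7:ℤ)) := by
      rw [← map_mul, ← map_mul, ← zpow_add₀ h0, ← zpow_add₀ h0]
      norm_num
    linear_combination ((1 - RatFunc.C (q^(4:ℤ) * a) * RatFunc.X) *
      (1 - RatFunc.C (q^(8:ℤ) * a) * RatFunc.X) *
      (1 - RatFunc.C (q^(-6:ℤ) * a) * RatFunc.X) *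
      (1 - RatFunc.C (q^(-10:ℤ) * a) * RatFunc.X)) * hC
  · refine ⟨fun _ _ => ⟨?_, ?_⟩,
      fun h _ => absurd h (not_fin q hq (-5) (by norm_num)),
      fun h _ => absurd h (not_fin q hq (-9) (by norm_num)),
      fun h _ => absurd h (not_fin q hq (-5) (by norm_num))⟩
    · exact no_shift q hq a a ha (-5) (-9) 0 (by simp) (by intro t; omega)
    · exact no_shift q hq a a ha (-9) (-5) 0 (by simp) (by intro t; omega)
  · have ha2 : q^(-2:ℤ) * a ≠ 0 := mul_ne_zero (zpow_ne_zero _ h0) ha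
    have ha2' : q^(2:ℤ) * a ≠ 0 := mul_ne_zero (zpow_ne_zero _ h0) ha
    refine ⟨fun _ _ => ⟨?_, ?_⟩,
      fun h _ => absurd h (not_fin q hq (-7) (by norm_num)),
      fun h _ => absurd h (not_fin q hq (-7) (by norm_num)),
      fun h _ => absurd h (not_fin q hq (-7) (by norm_num))⟩
    · refine no_shift q hq (q^(-2:ℤ) * a) (q^(2:ℤ) * a) ha2 (-7) (-7) 4 ?_
        (by intro t; omega)
      rw [← mul_assoc, ← zpow_add₀ h0]; norm_num
    · refine no_shift q hq (q^(2:ℤ) * a) (q^(-2:ℤ) * a) ha2' (-7) (-7) (-4) ?_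
        (by intro t; omega)
      rw [← mul_assoc, ← zpow_add₀ h0]; norm_num
  · intro h
    have hmem : ((q ^ (-5:ℤ), a) : ℂ × ℂ) ∈
        ({(q ^ (-7 : ℤ), q ^ (-2 : ℤ) * a), (q ^ (-7 : ℤ), q ^ (2 : ℤ) * a)} : Set (ℂ × ℂ)) := by
      rw [← h]; left; rfl
    have : q ^ (-5:ℤ) = q ^ (-7:ℤ) := by
      rcases hmem with h1 | h1 <;> exact (Prod.ext_iff.mp h1).1
    have := trans_zpow_inj' q hq this
    omega
end
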